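/- For any positive integer m and real numbers 0 ≤ x_1 ≤ x_2 ≤ ... ≤ x_m ≤ 1, the quantity x_1(1-x_1) + (x_2-x_1)(1-x_2) + ... + (x_m-x_{m-1})(1-x_m) is at most m/(2(m+1)), with equality when x_i = i/(m+1) for all i. -/

import Mathlib

/-!
Let `d 1, …, d (m+1)` be the increments of the path `0 = x 0, x 1, …, x m, 1`. The staircase
area is the area `1/2` below the diagonal minus the `m + 1` triangles with legs `d i` cut off along
it, so `2 S = 1 - ∑ d i ^ 2`. As `∑ d i = 1`, Cauchy–Schwarz gives `∑ d i ^ 2 ≥ 1 / (m + 1)`, with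
equality for equal increments.
-/

open Finset

theorem sq_add_sum_le_card_add_one_mul {ι α : Type*} [Semiring α] [LinearOrder α]
    [IsStrictOrderedRing α] [ExistsAddOfLE α] (s : Finset ι) (f : ι → α) (b : α) :
    (b + ∑ i ∈ s, f i) ^ 2 ≤ (#s + 1) * (b ^ 2 + ∑ i ∈ s, f i ^ 2) := by
  have h := sq_sum_le_card_mul_sum_sq (s := insertNone s) (f := fun i => i.elim b f)
  simpa [sum_insertNone, card_insertNone] using h

noncomputable def staircaseArea (x : ℕ → ℝ) (n : ℕ) : ℝ :=
  ∑ i ∈ Icc 1 n, (x i - x (i - 1)) * (1 - x i)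

section

variable (x : ℕ → ℝ)

theorem sum_Icc_sub_eq (n : ℕ) : ∑ i ∈ Icc 1 n, (x i - x (i - 1)) = x n - x 0 := by
  induction n with
  | zero => simp
  | succ n ih => rw [sum_Icc_succ_top (by omega), ih, Nat.add_sub_cancel]; ring

theorem two_mul_staircaseArea (h0 : x 0 = 0) (n : ℕ) :
    2 * staircaseArea x n = 1 - ((1 - x n) ^ 2 + ∑ i ∈ Icc 1 n, (x i - x (i - 1)) ^ 2) := by
  induction n with
  | zero => simp [staircaseArea, h0]
  | succ n ih =>
    rw [staircaseArea, sum_Icc_succ_top (by omega), sum_Icc_succ_top (by omega), mul_add,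
      ← staircaseArea, ih, Nat.add_sub_cancel]
    ring

theorem staircaseArea_le (h0 : x 0 = 0) (m : ℕ) : staircaseArea x m ≤ m / (2 * (m + 1)) := by
  have hcs := sq_add_sum_le_card_add_one_mul (Icc 1 m) (fun i => x i - x (i - 1)) (1 - x m)
  rw [sum_Icc_sub_eq, h0, sub_zero, sub_add_cancel, one_pow, Nat.card_Icc,
    Nat.add_sub_cancel] at hcs
  rw [le_div_iff₀ (by positivity)]
  linear_combination ((m : ℝ) + 1) * two_mul_staircaseArea x h0 m + hcs

theorem staircaseArea_of_eq_div (h0 : x 0 = 0) (m : ℕ)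
    (hx : ∀ i, 1 ≤ i → i ≤ m → x i = i / (m + 1)) :
    staircaseArea x m = m / (2 * (m + 1)) := by
  have hx' : ∀ i ≤ m, x i = i / (m + 1) := by
    intro i hi
    rcases i.eq_zero_or_pos with rfl | hpos
    · simp [h0]
    · exact hx i hpos hi
  have hstep : ∀ i ∈ Icc 1 m, x i - x (i - 1) = 1 / (m + 1) := by
    intro i hi
    obtain ⟨h1, him⟩ := mem_Icc.mp hi
    rw [hx' i him, hx' (i - 1) (by omega), Nat.cast_sub h1]
    ring
  have harea := two_mul_staircaseArea x h0 m
  rw [sum_congr rfl (fun i hi => by rw [hstep i hi]), sum_const, Nat.card_Icc,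
    Nat.add_sub_cancel, hx' m le_rfl, nsmul_eq_mul] at harea
  field_simp at harea
  have hm : (m : ℝ) + 1 ≠ 0 := by positivity
  rw [eq_div_iff (by positivity)]
  apply mul_left_cancel₀ hm
  linear_combination harea

end

theorem stmt0 (m : ℕ) (x : ℕ → ℝ)
    (h0 : x 0 = 0) :
    (∑ i ∈ Finset.Icc 1 m, (x i - x (i - 1)) * (1 - x i)) ≤ m / (2 * (m + 1)) ∧
    ((∀ i, 1 ≤ i → i ≤ m → x i = i / (m + 1)) →
      (∑ i ∈ Finset.Icc 1 m, (x i - x (i - 1)) * (1 - x i)) = m / (2 * (m + 1))) :=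
  ⟨staircaseArea_le x h0 m, staircaseArea_of_eq_div x h0 m⟩
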